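/- arXiv:1210.1693 — 4 statements merged into one kernel-verified Lean document; each statement's English description precedes it below -/
import Mathlib

section
/- Let (G, +) be a finite abelian group with a commutative associative ring multiplication · such that every element has a ∘-inverse, where x ∘ y = x + y + x·y, and let T = {τ_g : g ∈ G} ≤ Perm(G) with τ_g(x) = g ∘ x. Then for each prime p dividing |G|, the Sylow p-subgroup of T is exactly {τ_g : g ∈ G_p}, where G_p is the Sylow p-subgroup of (G, +). -/
/-! The translations compose like the circle operation, `τ_a τ_b = τ_(a ∘ b)`, so `T` is abelian
and has a unique Sylow `p`-subgroup. The primary component `G_p` is an ideal, hence the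
translations by its elements form a subgroup of `T`, of order `|G_p|` (a power of `p`) and of
index `[G : G_p]`, which is prime to `p`. So it is that Sylow subgroup. -/

theorem circle_assoc {R : Type*} [NonUnitalRing R] (a b x : R) :
    a + (b + x + b * x) + a * (b + x + b * x) = (a + b + a * b) + x + (a + b + a * b) * x := by
  noncomm_ring

theorem Subgroup.card_subgroupOf_of_le {G : Type*} [Group G] {H K : Subgroup G} (h : H ≤ K) :
    Nat.card (H.subgroupOf K) = Nat.card H :=
  Nat.card_congr (Subgroup.subgroupOfEquivOfLe h).toEquiv

theorem Subgroup.relIndex_mul_card {G : Type*} [Group G] {H K : Subgroup G} (h : H ≤ K) :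
    H.relIndex K * Nat.card H = Nat.card K := by
  rw [← card_subgroupOf_of_le h, relIndex, index_mul_card]

namespace AddCommGroup

variable {G : Type*} [AddCommGroup G] [Finite G] {p : ℕ} [hp : Fact p.Prime]

theorem exists_card_primaryComponent_eq_pow : ∃ n, Nat.card (primaryComponent G p) = p ^ n :=
  ⟨_, Nat.eq_prime_pow_of_unique_prime_dvd Nat.card_pos.ne' fun {q} hq hdvd => by
    have : Fact q.Prime := ⟨hq⟩
    obtain ⟨x, hx⟩ := exists_prime_addOrderOf_dvd_card' q hdvd
    obtain ⟨n, hn⟩ := mem_primaryComponent_iff_addOrderOf.mp x.2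
    rw [AddSubgroup.addOrderOf_coe, hx] at hn
    exact (Nat.prime_dvd_prime_iff_eq hq hp.out).mp (hq.dvd_of_dvd_pow (by rw [← hn]))⟩

-- The quotient has no element of order `p`, since `p • x ∈ G_p` already forces `x ∈ G_p`.
theorem not_dvd_index_primaryComponent : ¬ p ∣ (primaryComponent G p).index := by
  intro hdvd
  rw [AddSubgroup.index_eq_card] at hdvd
  obtain ⟨x, hx⟩ := exists_prime_addOrderOf_dvd_card' p hdvd
  induction x using QuotientAddGroup.induction_on with | H x => ?_
  have hpx : p • x ∈ primaryComponent G p := by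
    have h := addOrderOf_nsmul_eq_zero (x : G ⧸ primaryComponent G p)
    rwa [hx, ← QuotientAddGroup.mk_nsmul, QuotientAddGroup.eq_zero_iff] at h
  obtain ⟨k, hk⟩ := hpx
  have hx0 : (x : G ⧸ primaryComponent G p) = 0 :=
    (QuotientAddGroup.eq_zero_iff x).mpr ⟨k + 1, by rwa [pow_succ', mul_nsmul]⟩
  rw [hx0, addOrderOf_zero] at hx
  exact hp.out.one_lt.ne hx

end AddCommGroup

namespace NonUnitalCommRing

variable {G : Type*} [NonUnitalCommRing G] (hinv : ∀ x : G, ∃ y : G, x + y + x * y = 0)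

-- The translation `τ_g`.
noncomputable def circlePerm (g : G) : Equiv.Perm G where
  toFun x := g + x + g * x
  invFun x := (hinv g).choose + x + (hinv g).choose * x
  left_inv x := by
    dsimp only
    rw [circle_assoc, add_comm _ g, mul_comm _ g, (hinv g).choose_spec, zero_add, zero_mul,
      add_zero]
  right_inv x := by
    dsimp only
    rw [circle_assoc, (hinv g).choose_spec, zero_add, zero_mul, add_zero]

@[simp]
theorem circlePerm_apply (g x : G) : circlePerm hinv g x = g + x + g * x := rfl

theorem circlePerm_mul (a b : G) :
    circlePerm hinv a * circlePerm hinv b = circlePerm hinv (a + b + a * b) :=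
  Equiv.ext (circle_assoc a b)

theorem circlePerm_zero : circlePerm hinv 0 = 1 :=
  Equiv.ext fun x => by simp

theorem circlePerm_injective : Function.Injective (circlePerm hinv) := fun a b h => by
  simpa using congrArg (· 0) h

theorem circlePerm_eq_iff {g : G} {t : Equiv.Perm G} :
    circlePerm hinv g = t ↔ ∀ x, t x = g + x + g * x := by
  rw [Equiv.ext_iff]
  exact forall_congr' fun x => eq_comm

noncomputable def circleSubgroup (I : AddSubgroup G) (hI : ∀ a b, b ∈ I → a * b ∈ I) :
    Subgroup (Equiv.Perm G) where
  carrier := circlePerm hinv '' I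
  one_mem' := ⟨0, I.zero_mem, circlePerm_zero hinv⟩
  mul_mem' := by
    rintro _ _ ⟨a, ha, rfl⟩ ⟨b, hb, rfl⟩
    exact ⟨a + b + a * b, I.add_mem (I.add_mem ha hb) (hI a b hb), (circlePerm_mul hinv a b).symm⟩
  inv_mem' := by
    rintro _ ⟨a, ha, rfl⟩
    obtain ⟨b, hb⟩ := hinv a
    have hbI : b ∈ I := by
      have hb' : b = -(a + b * a) := by
        rw [eq_neg_iff_add_eq_zero, mul_comm, ← hb]
        abel
      rw [hb']
      exact I.neg_mem (I.add_mem ha (hI b a ha))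
    refine ⟨b, hbI, (eq_inv_of_mul_eq_one_left ?_)⟩
    rw [circlePerm_mul, add_comm b, mul_comm b, hb, circlePerm_zero]

variable {hinv}

theorem mem_circleSubgroup {I : AddSubgroup G} {hI : ∀ a b, b ∈ I → a * b ∈ I}
    {t : Equiv.Perm G} : t ∈ circleSubgroup hinv I hI ↔ ∃ g ∈ I, circlePerm hinv g = t :=
  Iff.rfl

instance (I : AddSubgroup G) (hI : ∀ a b, b ∈ I → a * b ∈ I) :
    IsMulCommutative (circleSubgroup hinv I hI) := by
  refine ⟨⟨fun ⟨_, a, _, ha⟩ ⟨_, b, _, hb⟩ => Subtype.ext ?_⟩⟩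
  simp only [Subgroup.coe_mul, ← ha, ← hb, circlePerm_mul, add_comm a, mul_comm a]

theorem circleSubgroup_mono {I J : AddSubgroup G} {hI : ∀ a b, b ∈ I → a * b ∈ I}
    {hJ : ∀ a b, b ∈ J → a * b ∈ J} (hIJ : I ≤ J) :
    circleSubgroup hinv I hI ≤ circleSubgroup hinv J hJ :=
  Set.image_mono hIJ

theorem card_circleSubgroup (I : AddSubgroup G) (hI : ∀ a b, b ∈ I → a * b ∈ I) :
    Nat.card (circleSubgroup hinv I hI) = Nat.card I :=
  Nat.card_image_of_injective (circlePerm_injective hinv) I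

theorem relIndex_circleSubgroup_top [Finite G] (I : AddSubgroup G)
    (hI : ∀ a b, b ∈ I → a * b ∈ I) (hTop : ∀ a b, b ∈ (⊤ : AddSubgroup G) → a * b ∈ ⊤) :
    (circleSubgroup hinv I hI).relIndex (circleSubgroup hinv ⊤ hTop) = I.index := by
  have h := Subgroup.relIndex_mul_card
    (circleSubgroup_mono (hinv := hinv) (hI := hI) (hJ := hTop) le_top)
  rw [card_circleSubgroup, card_circleSubgroup, AddSubgroup.card_top, ← I.index_mul_card] at h
  exact Nat.eq_of_mul_eq_mul_right Nat.card_pos h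

end NonUnitalCommRing

theorem AddCommGroup.mul_mem_primaryComponent {R : Type*} [NonUnitalRing R] {p : ℕ} (a : R)
    {b : R} (hb : b ∈ primaryComponent R p) : a * b ∈ primaryComponent R p :=
  hb.imp fun _ hk => by rw [← mul_smul_comm, hk, mul_zero]

open NonUnitalCommRing in
theorem sylow_of_tau_subgroup_general {G : Type*} [NonUnitalCommRing G] [Finite G]
    (hinv : ∀ x : G, ∃ y : G, x + y + x * y = 0)
    (T : Subgroup (Equiv.Perm G))
    (hT : ∀ t : Equiv.Perm G, t ∈ T ↔ ∃ g : G, ∀ x : G, t x = g + x + g * x)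
    (p : ℕ) [Fact p.Prime] (S : Sylow p ↥T) :
    ∀ t : ↥T, t ∈ (S : Subgroup ↥T) ↔
      ∃ g ∈ AddCommGroup.primaryComponent G p,
        ∀ x : G, (t : Equiv.Perm G) x = g + x + g * x := by
  replace hT : T = circleSubgroup hinv ⊤ fun _ _ _ => AddSubgroup.mem_top _ := by
    ext t
    simp [hT, mem_circleSubgroup, circlePerm_eq_iff]
  set P := circleSubgroup hinv (AddCommGroup.primaryComponent G p)
    fun a _ => AddCommGroup.mul_mem_primaryComponent a
  have hPp : IsPGroup p (P.subgroupOf T) := by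
    obtain ⟨n, hn⟩ := AddCommGroup.exists_card_primaryComponent_eq_pow (G := G) (p := p)
    refine IsPGroup.of_card (n := n) ?_
    rw [Subgroup.card_subgroupOf_of_le (hT ▸ circleSubgroup_mono le_top), card_circleSubgroup, hn]
  have hindex : ¬ p ∣ (P.subgroupOf T).index := by
    rw [← Subgroup.relIndex, hT, relIndex_circleSubgroup_top]
    exact AddCommGroup.not_dvd_index_primaryComponent
  have : IsMulCommutative T := hT ▸ inferInstance
  have := Sylow.unique_of_normal S inferInstance
  intro t
  rw [Subsingleton.elim S (hPp.toSylow hindex), IsPGroup.toSylow_coe, Subgroup.mem_subgroupOf,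
    mem_circleSubgroup]
  simp_rw [circlePerm_eq_iff]

/-- Let `(G,+,·)` be a finite commutative associative non-unital ring whose circle
operation `x ∘ y = x + y + x·y` admits inverses, and let `T ≤ Perm G` be the subgroup of
all translations `τ_g : x ↦ g ∘ x`.  Then for each prime `p` dividing `|G|`, the Sylow
`p`-subgroup of `T` consists exactly of the `τ_g` with `g` in the Sylow `p`-subgroup
(`p`-primary component) of `(G,+)`. -/
theorem sylow_of_tau_subgroup {G : Type*} [NonUnitalCommRing G] [Finite G]
    (hinv : ∀ x : G, ∃ y : G, x + y + x * y = 0)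
    (T : Subgroup (Equiv.Perm G))
    (hT : ∀ t : Equiv.Perm G, t ∈ T ↔ ∃ g : G, ∀ x : G, t x = g + x + g * x)
    (p : ℕ) [Fact p.Prime] (hp : p ∣ Nat.card G) (S : Sylow p ↥T) :
    ∀ t : ↥T, t ∈ (S : Subgroup ↥T) ↔
      ∃ g ∈ AddCommGroup.primaryComponent G p,
        ∀ x : G, (t : Equiv.Perm G) x = g + x + g * x :=
  sylow_of_tau_subgroup_general hinv T hT p S
end

section
/- Let Γ and G be finite nilpotent groups of the same order n, and let β : Γ → Hol(G) be an injective homomorphism whose image acts regularly on G. Then for every prime p dividing n and every prime q ≠ p dividing n, the composite map π_q ∘ β ∘ ι_p : Γ_p → Hol(G_q) is trivial, where Γ_p is the Sylow p-subgroup of Γ, ι_p : Γ_p → Γ the inclusion, and π_q : Hol(G) → Hol(G_q) the projection induced by the decomposition Hol(G) ≅ ∏_p Hol(G_p). -/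
/-!
Through its `q`-component, `β` makes `Γ` act transitively on `G_q`, a set whose size is a power
of `q`. The Sylow `p`-subgroup of `Γ` is a normal `p`-subgroup, so it has a fixed point in `G_q`;
by normality and transitivity it then fixes every point.
-/

/-- The holomorph of a group `G`: the subgroup of `Perm G` generated by the right regular
representation `ρ(g) : x ↦ x * g⁻¹` together with the automorphisms of `G`. -/
def Hol (G : Type*) [Group G] : Subgroup (Equiv.Perm G) :=
  Subgroup.closure
    ((Set.range fun g : G => Equiv.mulRight g⁻¹) ∪
      (Set.range fun f : MulAut G => (f : G ≃* G).toEquiv))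

theorem IsPGroup.smul_eq_self_of_normal {p : ℕ} [Fact p.Prime] {Γ X : Type*} [Group Γ]
    [MulAction Γ X] [MulAction.IsPretransitive Γ X] {K : Subgroup Γ} [K.Normal]
    (hK : IsPGroup p K) (hX : ¬ p ∣ Nat.card X) {k : Γ} (hk : k ∈ K) (x : X) : k • x = x := by
  obtain ⟨y, hy⟩ := hK.nonempty_fixed_point_of_prime_not_dvd_card X hX
  obtain ⟨g, rfl⟩ := MulAction.exists_smul_eq Γ y x
  have hconj : g⁻¹ * k * g ∈ K := by simpa using ‹K.Normal›.conj_mem k hk g⁻¹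
  calc k • g • y = g • (g⁻¹ * k * g) • y := by simp [mul_smul]
    _ = g • y := congrArg (g • ·) (hy ⟨_, hconj⟩)

instance MonoidHom.normal_range_mulSingle {ι : Type*} [DecidableEq ι] (Γ : ι → Type*)
    [∀ i, Group (Γ i)] (i : ι) : (MonoidHom.mulSingle Γ i).range.Normal where
  conj_mem := by
    rintro _ ⟨c, rfl⟩ g
    refine ⟨g i * c * (g i)⁻¹, funext fun j => ?_⟩
    obtain rfl | hj := eq_or_ne j i <;> simp [*]

theorem offdiagonal_components_trivial_general (n : ℕ)
    (Γ G : n.primeFactors → Type) [∀ p, Group (Γ p)] [∀ p, Group (G p)]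
    (hΓ : ∀ p : n.primeFactors, Nat.card (Γ p) = (p : ℕ) ^ n.factorization (p : ℕ))
    (hG : ∀ p : n.primeFactors, Nat.card (G p) = (p : ℕ) ^ n.factorization (p : ℕ))
    (β : (∀ p, Γ p) →* ∀ p, Hol (G p))
    (hreg : ∀ x y : ∀ p, G p, ∃! γ : ∀ p, Γ p,
      (fun p => ((β γ p : Equiv.Perm (G p)) (x p))) = y) :
    ∀ p q : n.primeFactors, p ≠ q → ∀ γ : Γ p, β (Pi.mulSingle p γ) q = 1 := by
  intro p q hpq γ
  have hp : Fact (p : ℕ).Prime := ⟨Nat.prime_of_mem_primeFactors p.2⟩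
  have hq : (q : ℕ).Prime := Nat.prime_of_mem_primeFactors q.2
  let _ : MulAction (∀ r, Γ r) (G q) := MulAction.compHom _
    ((Hol (G q)).subtype.comp ((Pi.evalMonoidHom (fun r => Hol (G r)) q).comp β))
  have htrans : MulAction.IsPretransitive (∀ r, Γ r) (G q) := ⟨fun z z' => by
    obtain ⟨δ, hδ, -⟩ := hreg (Pi.mulSingle q z) (Pi.mulSingle q z')
    exact ⟨δ, (by simpa using congrFun hδ q : (β δ q : Equiv.Perm (G q)) z = z')⟩⟩
  have hK : IsPGroup p (MonoidHom.mulSingle Γ p).range :=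
    (IsPGroup.of_card (hΓ p)).of_surjective _ (MonoidHom.mulSingle Γ p).rangeRestrict_surjective
  have hGq : ¬ (p : ℕ) ∣ Nat.card (G q) := by
    rw [hG q]
    exact fun h => hpq <| Subtype.ext <|
      (Nat.prime_dvd_prime_iff_eq hp.out hq).1 (hp.out.dvd_of_dvd_pow h)
  exact Subtype.ext (Equiv.ext fun z => hK.smul_eq_self_of_normal hGq ⟨γ, rfl⟩ z)

/-- Let `Γ = ∏_p Γ_p` and `G = ∏_p G_p` be nilpotent groups of order `n`, presented via
their Sylow decompositions (`Γ_p`, `G_p` of order `p^{v_p}`), and let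
`β : Γ →* Hol G = ∏_p Hol G_p` be a regular embedding (injective, with image acting
regularly on `G = ∏_p G_p` componentwise).  Then for distinct primes `p ≠ q` dividing
`n`, the component `π_q ∘ β ∘ ι_p : Γ_p → Hol G_q` is trivial. -/
theorem offdiagonal_components_trivial (n : ℕ) (hn : 0 < n)
    (Γ G : n.primeFactors → Type) [∀ p, Group (Γ p)] [∀ p, Group (G p)]
    [∀ p, Finite (Γ p)] [∀ p, Finite (G p)]
    (hΓ : ∀ p : n.primeFactors, Nat.card (Γ p) = (p : ℕ) ^ n.factorization (p : ℕ))
    (hG : ∀ p : n.primeFactors, Nat.card (G p) = (p : ℕ) ^ n.factorization (p : ℕ))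
    (β : (∀ p, Γ p) →* ∀ p, Hol (G p))
    (hβinj : Function.Injective β)
    (hreg : ∀ x y : ∀ p, G p, ∃! γ : ∀ p, Γ p,
      (fun p => ((β γ p : Equiv.Perm (G p)) (x p))) = y) :
    ∀ p q : n.primeFactors, p ≠ q → ∀ γ : Γ p, β (Pi.mulSingle p γ) q = 1 :=
  offdiagonal_components_trivial_general n Γ G hΓ hG β hreg
end

section
/- Let n = ∏_p p^{v_p} be a positive integer. If v_p ≤ 2 for every prime p dividing n and p does not divide q^{v_q} − 1 for all primes p, q dividing n, then every group of order n is abelian. -/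
/-!
A Sylow `p`-subgroup `P` has order `p ^ v` with `v ≤ 2`, so it is abelian, and `N(P)/C(P)` embeds
in `Aut P` with order dividing `[G : P]`. If a prime `q` divided that order, an automorphism `σ`
of `P` of order `q` would fix a proper subgroup of order `p ^ j`, and since the other orbits of
`⟨σ⟩` have size `q`, `q ∣ p ^ (v - j) - 1`, which divides `p ^ v - 1` because `v ≤ 2`: this
contradicts Dickson's condition. Hence `N(P) = C(P)` for every `p`, so Burnside's transfer
`G → P` has a kernel of order prime to `p` containing `[G, G]`, and `[G, G]` is trivial.
-/

open Subgroup

theorem isMulCommutative_of_card_eq_prime_pow_of_le_two {H : Type*} [Group H] {p v : ℕ}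
    [Fact p.Prime] (hH : Nat.card H = p ^ v) (hv : v ≤ 2) : IsMulCommutative H := by
  interval_cases v
  · have := (Nat.card_eq_one_iff_unique.mp (by simpa using hH)).1
    exact IsCyclic.isMulCommutative
  · have := isCyclic_of_prime_card (by simpa using hH)
    exact IsCyclic.isMulCommutative
  · exact IsPGroup.isMulCommutative_of_card_eq_prime_sq hH

theorem MulAut.exists_dvd_prime_pow_sub_one_of_orderOf_eq {P : Type*} [Group P] [Finite P]
    {p q v : ℕ} (hp : p.Prime) (hq : q.Prime) (hqp : q ≠ p) (hP : Nat.card P = p ^ v)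
    (σ : MulAut P) (hσ : orderOf σ = q) : ∃ k, 0 < k ∧ k ≤ v ∧ q ∣ p ^ k - 1 := by
  have : Fact q.Prime := ⟨hq⟩
  let F := FixedPoints.subgroup (zpowers σ) P
  have hσq : IsPGroup q (zpowers σ) := .of_card (n := 1) (by rw [Nat.card_zpowers, hσ, pow_one])
  have hmod : p ^ v ≡ Nat.card F [MOD q] := hP ▸ hσq.card_modEq_card_fixedPoints P
  obtain ⟨j, hjle, hF⟩ := (Nat.dvd_prime_pow hp).mp (hP ▸ F.card_subgroup_dvd_card)
  have hjv : j < v := by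
    refine hjle.lt_of_ne fun hj => hq.one_lt.ne' ?_
    have hFtop : F = ⊤ := F.eq_top_of_card_eq (by rw [hF, hP, hj])
    have : σ = 1 := MulEquiv.ext fun x => (hFtop ▸ mem_top x : x ∈ F) ⟨σ, mem_zpowers σ⟩
    rw [← hσ, this, orderOf_one]
  refine ⟨v - j, by omega, by omega, (Nat.modEq_iff_dvd' (Nat.one_le_pow _ _ hp.pos)).mp ?_⟩
  have hcop : Nat.Coprime q (p ^ j) := ((Nat.coprime_primes hq hp).mpr hqp).pow_right j
  refine (Nat.ModEq.cancel_left_of_coprime hcop ?_).symm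
  rwa [mul_one, ← pow_add, Nat.add_sub_cancel' hjv.le, ← hF]

namespace Sylow

variable {G : Type*} [Group G] [Finite G] {p : ℕ} [Fact p.Prime]

theorem normalizer_le_centralizer_of_not_dvd_pow_sub_one (P : Sylow p G) [IsMulCommutative P]
    (h : ∀ q ∈ (Nat.card G).primeFactors, q ≠ p →
      ∀ k, 0 < k → k ≤ (Nat.card G).factorization p → ¬ q ∣ p ^ k - 1) :
    normalizer (P : Set G) ≤ centralizer (P : Set G) := by
  set r := (centralizer (P : Set G)).relIndex (normalizer (P : Set G))
  have hr_aut : r ∣ Nat.card (MulAut P) := by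
    have key := card_dvd_of_injective _ (QuotientGroup.kerLift_injective P.normalizerMonoidHom)
    rwa [normalizerMonoidHom_ker, ← index, ← relIndex] at key
  have hr_index : r ∣ P.index :=
    (relIndex_dvd_of_le_left _ P.le_centralizer).trans (relIndex_dvd_index_of_le P.le_normalizer)
  refine relIndex_eq_one.mp (Nat.eq_one_iff_not_exists_prime_dvd.mpr fun q hq hqr => ?_)
  have : Fact q.Prime := ⟨hq⟩
  obtain ⟨σ, hσ⟩ := exists_prime_orderOf_dvd_card' q (hqr.trans hr_aut)
  have hqG : q ∣ Nat.card G := hqr.trans (hr_index.trans P.index_dvd_card)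
  have hqp : q ≠ p := by
    rintro rfl
    exact P.not_dvd_index (hqr.trans hr_index)
  obtain ⟨k, hk0, hkv, hqk⟩ := MulAut.exists_dvd_prime_pow_sub_one_of_orderOf_eq Fact.out hq hqp
    P.card_eq_multiplicity σ hσ
  exact h q (Nat.mem_primeFactors.mpr ⟨hq, hqG, Nat.card_pos.ne'⟩) hqp k hk0 hkv hqk

open scoped IsMulCommutative in
theorem not_dvd_card_commutator (P : Sylow p G)
    (hP : normalizer (P : Set G) ≤ centralizer (P : Set G)) : ¬ p ∣ Nat.card (commutator G) := by
  have : IsMulCommutative P := ⟨⟨fun a b => Subtype.ext (hP (le_normalizer b.2) a a.2)⟩⟩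
  exact fun h => MonoidHom.not_dvd_card_ker_transferSylow P hP
    (h.trans (card_dvd_of_le (Abelianization.commutator_subset_ker _)))

end Sylow

theorem mul_comm_of_forall_exists_sylow_normalizer_le_centralizer {G : Type*} [Group G] [Finite G]
    (h : ∀ p ∈ (Nat.card G).primeFactors,
      ∃ P : Sylow p G, normalizer (P : Set G) ≤ centralizer (P : Set G)) (x y : G) :
    x * y = y * x := by
  have hcard : Nat.card (commutator G) = 1 := by
    refine Nat.eq_one_iff_not_exists_prime_dvd.mpr fun p hp hpc => ?_
    have : Fact p.Prime := ⟨hp⟩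
    obtain ⟨P, hP⟩ := h p (Nat.mem_primeFactors.mpr
      ⟨hp, hpc.trans (card_subgroup_dvd_card _), Nat.card_pos.ne'⟩)
    exact P.not_dvd_card_commutator hP hpc
  rw [← commutatorElement_eq_one_iff_mul_comm, ← mem_bot, ← card_eq_one.mp hcard]
  exact commutator_mem_commutator (mem_top x) (mem_top y)

theorem forall_group_abelian_of_dickson_general (n : ℕ)
    (h1 : ∀ p ∈ n.primeFactors, n.factorization p ≤ 2)
    (h2 : ∀ p ∈ n.primeFactors, ∀ q ∈ n.primeFactors,
      ¬ p ∣ q ^ n.factorization q - 1) :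
    ∀ (G : Type) [Group G] [Finite G], Nat.card G = n → ∀ x y : G, x * y = y * x := by
  rintro G _ _ rfl
  refine mul_comm_of_forall_exists_sylow_normalizer_le_centralizer fun p hp => ?_
  have : Fact p.Prime := ⟨Nat.prime_of_mem_primeFactors hp⟩
  let P : Sylow p G := default
  have : IsMulCommutative P :=
    isMulCommutative_of_card_eq_prime_pow_of_le_two P.card_eq_multiplicity (h1 p hp)
  refine ⟨P, P.normalizer_le_centralizer_of_not_dvd_pow_sub_one
    fun q hq _ k hk0 hkv hqk => h2 q hq p hp ?_⟩
  obtain rfl | rfl : k = 1 ∨ k = (Nat.card G).factorization p := by have := h1 p hp; omega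
  · rw [pow_one] at hqk
    simpa only [one_pow] using hqk.trans (Nat.sub_dvd_pow_sub_pow p 1 _)
  · exact hqk

/-- (Dickson) Let `n = ∏_p p^{v_p}`.  If `v_p ≤ 2` for every prime `p` dividing `n`, and
`p ∤ q^{v_q} - 1` for all primes `p, q` dividing `n`, then every group of order `n` is
abelian. -/
theorem forall_group_abelian_of_dickson (n : ℕ) (hn : 0 < n)
    (h1 : ∀ p ∈ n.primeFactors, n.factorization p ≤ 2)
    (h2 : ∀ p ∈ n.primeFactors, ∀ q ∈ n.primeFactors,
      ¬ p ∣ q ^ n.factorization q - 1) :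
    ∀ (G : Type) [Group G] [Finite G], Nat.card G = n → ∀ x y : G, x * y = y * x :=
  forall_group_abelian_of_dickson_general n h1 h2
end

section
/- Let n = ∏_p p^{v_p} be a positive integer such that every group of order n is abelian. Then v_p ≤ 2 for every prime p dividing n, and p does not divide q^{v_q} − 1 for all primes p, q dividing n. -/
open Subgroup SemidirectProduct

noncomputable section

lemma exists_nonabelian_group (N : Type) [Group N] [Finite N] (θ : MulAut N) (a : N)
    (hθ : θ a ≠ a) (m : ℕ) (hm : m ≠ 0) :
    ∃ (G : Type) (_ : Group G) (_ : Finite G),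
      Nat.card G = Nat.card N * orderOf θ * m ∧ ∃ x y : G, x * y ≠ y * x := by
  haveI : NeZero m := ⟨hm⟩
  haveI : Finite (MulAut N) := Finite.of_injective (fun f => (f : N → N)) fun f g hfg => by
    ext x; exact congrFun hfg x
  set φ : (zpowers θ) →* MulAut N := (zpowers θ).subtype with hφ
  have e : (N ⋊[φ] (zpowers θ)) ≃ N × (zpowers θ) :=
    ⟨fun x => (x.left, x.right), fun p => ⟨p.1, p.2⟩, fun x => rfl, fun p => rfl⟩
  haveI : Finite (N ⋊[φ] (zpowers θ)) := Finite.of_equiv _ e.symm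
  refine ⟨(N ⋊[φ] (zpowers θ)) × Multiplicative (ZMod m), inferInstance, inferInstance, ?_, ?_⟩
  · rw [Nat.card_prod, Nat.card_congr e, Nat.card_prod, Nat.card_zpowers,
      Nat.card_congr Multiplicative.toAdd, Nat.card_zmod]
  · refine ⟨(inl a, 1), (inr ⟨θ, mem_zpowers θ⟩, 1), fun hc => hθ ?_⟩
    have := congrArg (fun z => z.1.left) hc
    simpa [hφ] using this.symm

def shear (p : ℕ) : MulAut (Multiplicative (ZMod p × ZMod p)) where
  toFun x := .ofAdd (x.toAdd.1, x.toAdd.1 + x.toAdd.2)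
  invFun x := .ofAdd (x.toAdd.1, x.toAdd.2 - x.toAdd.1)
  left_inv x := by simp
  right_inv x := by simp
  map_mul' x y := by
    simp only [toAdd_mul, Prod.fst_add, Prod.snd_add, ← ofAdd_add, Prod.mk_add_mk]
    congr 1
    ext <;> simp <;> ring

lemma shear_apply (p : ℕ) (a b : ZMod p) :
    (shear p) (.ofAdd (a, b)) = .ofAdd (a, a + b) := rfl

lemma shear_pow (p : ℕ) (k : ℕ) (x : Multiplicative (ZMod p × ZMod p)) :
    ((shear p) ^ k) x = .ofAdd (x.toAdd.1, k • x.toAdd.1 + x.toAdd.2) := by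
  induction k with
  | zero => simp
  | succ k ih =>
    rw [pow_succ', MulAut.mul_apply, ih, shear_apply]
    refine congrArg Multiplicative.ofAdd (Prod.ext rfl ?_)
    rw [succ_nsmul]
    abel

lemma orderOf_shear (p : ℕ) [hp : Fact p.Prime] : orderOf (shear p) = p := by
  have h1 : (shear p) ^ p = 1 := by
    refine MulEquiv.ext fun x => ?_
    rw [shear_pow]
    have : (p : ℕ) • (x.toAdd.1 : ZMod p) = 0 := by
      simp [nsmul_eq_mul, ZMod.natCast_self]
    rw [this, zero_add]
    simp
  have h2 : shear p ≠ 1 := by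
    intro hc
    have := congrArg (fun f : MulAut (Multiplicative (ZMod p × ZMod p)) =>
      (f (.ofAdd (1, 0))).toAdd.2) hc
    simp [shear] at this
  have hd := orderOf_dvd_of_pow_eq_one h1
  rcases hp.out.eq_one_or_self_of_dvd _ hd with h | h
  · exact absurd (orderOf_eq_one_iff.mp h) h2
  · exact h

def unitAut (K : Type) [Field K] : Kˣ →* MulAut (Multiplicative K) where
  toFun u :=
    { toFun := fun x => .ofAdd ((u : K) * x.toAdd)
      invFun := fun x => .ofAdd ((↑u⁻¹ : K) * x.toAdd)
      left_inv := fun x => by simp [← mul_assoc]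
      right_inv := fun x => by simp [← mul_assoc]
      map_mul' := fun x y => by simp [← ofAdd_add, mul_add] }
  map_one' := MulEquiv.ext fun x => by simp
  map_mul' u v := by
    refine MulEquiv.ext fun x => ?_
    show Multiplicative.ofAdd _ = Multiplicative.ofAdd _
    simp [mul_assoc]

lemma unitAut_injective (K : Type) [Field K] : Function.Injective (unitAut K) := by
  intro u v huv
  have := congrArg (fun f : MulAut (Multiplicative K) => (f (.ofAdd 1)).toAdd) huv
  simp only [unitAut] at this
  exact Units.ext (by simpa using this)

/-- (Converse of Dickson's criterion) Let `n = ∏_p p^{v_p}` be such that every group of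
order `n` is abelian.  Then `v_p ≤ 2` for every prime `p` dividing `n`, and
`p ∤ q^{v_q} - 1` for all primes `p, q` dividing `n`. -/
theorem dickson_of_forall_group_abelian (n : ℕ) (hn : 0 < n)
    (h : ∀ (G : Type) [Group G] [Finite G], Nat.card G = n → ∀ x y : G, x * y = y * x) :
    (∀ p ∈ n.primeFactors, n.factorization p ≤ 2) ∧
    (∀ p ∈ n.primeFactors, ∀ q ∈ n.primeFactors,
      ¬ p ∣ q ^ n.factorization q - 1) := by
  constructor
  · intro p hp
    by_contra hlt
    push_neg at hlt
    haveI : Fact p.Prime := ⟨Nat.prime_of_mem_primeFactors hp⟩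
    have h3 : p ^ 3 ∣ n := (pow_dvd_pow p hlt).trans (Nat.ordProj_dvd n p)
    have hm : n / p ^ 3 ≠ 0 := by
      have := Nat.div_pos (Nat.le_of_dvd hn h3) (pow_pos (Nat.prime_of_mem_primeFactors hp).pos 3)
      omega
    have hθ : (shear p) (.ofAdd ((1 : ZMod p), 0)) ≠ .ofAdd ((1 : ZMod p), 0) := by
      intro hc
      have := congrArg (fun x : Multiplicative (ZMod p × ZMod p) => x.toAdd.2) hc
      simp [shear] at this
    obtain ⟨G, _, _, hcard, x, y, hxy⟩ :=
      exists_nonabelian_group _ (shear p) _ hθ (n / p ^ 3) hm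
    refine hxy (h G ?_ x y)
    rw [hcard, orderOf_shear]
    have hN : Nat.card (Multiplicative (ZMod p × ZMod p)) = p * p := by
      rw [Nat.card_congr Multiplicative.toAdd, Nat.card_prod, Nat.card_zmod]
    rw [hN, show p * p * p = p ^ 3 by ring]
    exact Nat.mul_div_cancel' h3
  · intro p hp q hq hdvd
    haveI : Fact p.Prime := ⟨Nat.prime_of_mem_primeFactors hp⟩
    haveI : Fact q.Prime := ⟨Nat.prime_of_mem_primeFactors hq⟩
    have hp' := Nat.prime_of_mem_primeFactors hp
    have hq' := Nat.prime_of_mem_primeFactors hq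
    set v := n.factorization q with hv
    have hv1 : 1 ≤ v :=
      hq'.factorization_pos_of_dvd hn.ne' (Nat.dvd_of_mem_primeFactors hq)
    have hv0 : v ≠ 0 := by omega
    have hqv1 : 1 ≤ q ^ v := Nat.one_le_pow _ _ hq'.pos
    have hpq : p ≠ q := by
      rintro rfl
      have h1 : p ∣ p ^ v := dvd_pow_self p hv0
      have h2 : p ∣ 1 := by
        have := Nat.dvd_sub h1 hdvd
        rwa [Nat.sub_sub_self hqv1] at this
      exact hp'.one_lt.ne' (Nat.dvd_one.mp h2)
    haveI : Fintype (GaloisField q v) := Fintype.ofFinite _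
    have hcardK : Fintype.card (GaloisField q v) = q ^ v := by
      rw [← Nat.card_eq_fintype_card]; exact GaloisField.card q v hv0
    haveI : Fintype (GaloisField q v)ˣ := Fintype.ofFinite _
    have hdvdU : p ∣ Fintype.card (GaloisField q v)ˣ := by
      rw [← Nat.card_eq_fintype_card, Nat.card_units, Nat.card_eq_fintype_card, hcardK]
      exact hdvd
    obtain ⟨u, hu⟩ := exists_prime_orderOf_dvd_card p hdvdU
    have hune : u ≠ 1 := by
      intro hc
      exact hp'.one_lt.ne' (by simpa [hc] using hu.symm)
    set θ := unitAut (GaloisField q v) u with hθdef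
    have hord : orderOf θ = p := by
      rw [hθdef, orderOf_injective (unitAut (GaloisField q v)) (unitAut_injective (GaloisField q v)) u, hu]
    have hθ : θ (.ofAdd (1 : GaloisField q v)) ≠ .ofAdd (1 : GaloisField q v) := by
      intro hc
      apply hune
      have : ((u : GaloisField q v) * 1) = 1 := congrArg Multiplicative.toAdd hc
      exact Units.ext (by simpa using this)
    have hqvp : q ^ v * p ∣ n := by
      refine Nat.Coprime.mul_dvd_of_dvd_of_dvd ?_ (Nat.ordProj_dvd n q)
        (Nat.dvd_of_mem_primeFactors hp)
      exact ((Nat.coprime_primes hq' hp').mpr (Ne.symm hpq)).pow_left v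
    have hm : n / (q ^ v * p) ≠ 0 := by
      have := Nat.div_pos (Nat.le_of_dvd hn hqvp)
        (Nat.mul_pos (pow_pos hq'.pos v) hp'.pos)
      omega
    obtain ⟨G, _, _, hcard, x, y, hxy⟩ :=
      exists_nonabelian_group (Multiplicative (GaloisField q v)) θ _ hθ (n / (q ^ v * p)) hm
    refine hxy (h G ?_ x y)
    rw [hcard, hord]
    have hN : Nat.card (Multiplicative (GaloisField q v)) = q ^ v := by
      rw [Nat.card_congr Multiplicative.toAdd, Nat.card_eq_fintype_card, hcardK]
    rw [hN]
    exact Nat.mul_div_cancel' hqvp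
end
end
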